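/- arXiv:1909.11286 — 2 statements merged into one kernel-verified Lean document; each statement's English description precedes it below -/
import Mathlib

section
/- Let p and q be probability density functions on ℝⁿ. The function D(x) = p(x)/(p(x)+q(x)) (defined where p(x)+q(x)>0) maximizes, over all measurable functions D: ℝⁿ → (0,1), the functional V(D) = ∫ p(x)·log(D(x)) dx + ∫ q(x)·log(1 − D(x)) dx. That is, for any measurable D: ℝⁿ → (0,1), V(D) ≤ V(D*) where D* = p/(p+q). -/
/-!
For fixed `a, b ≥ 0` the integrand `a log y + b log (1 - y)` of `V` is maximized over `y ∈ (0, 1)`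
at `y = a / (a + b)`: this is Gibbs' inequality for the two-point distributions `(y, 1 - y)` and
`(a, b) / (a + b)`, which follows from `log x ≤ x - 1`. Integrating the pointwise inequality gives
`V(D) ≤ V(D*)`.
-/

open MeasureTheory Real

lemma mul_log_le_mul_log_div_add_sub {a c y : ℝ} (ha : 0 ≤ a) (hc : 0 < c) (hy : 0 < y) :
    a * log y ≤ a * log (a / c) + (c * y - a) := by
  rcases ha.eq_or_lt with rfl | ha
  · simpa using (mul_pos hc hy).le
  have hlog : log (c * y / a) = log y - log (a / c) := by
    rw [log_div (by positivity) ha.ne', log_mul hc.ne' hy.ne', log_div ha.ne' hc.ne']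
    ring
  have key := mul_le_mul_of_nonneg_left (log_le_sub_one_of_pos (by positivity : 0 < c * y / a)) ha.le
  rw [hlog, mul_sub_one, mul_div_cancel₀ _ ha.ne'] at key
  linarith

lemma mul_log_add_mul_log_one_sub_le {a b y : ℝ} (ha : 0 ≤ a) (hb : 0 ≤ b)
    (hy : y ∈ Set.Ioo (0 : ℝ) 1) :
    a * log y + b * log (1 - y) ≤ a * log (a / (a + b)) + b * log (1 - a / (a + b)) := by
  obtain ⟨hy0, hy1⟩ := hy
  rcases (add_nonneg ha hb).eq_or_lt with hab | hab
  · obtain ⟨rfl, rfl⟩ : a = 0 ∧ b = 0 := ⟨by linarith, by linarith⟩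
    simp
  have hb' : 1 - a / (a + b) = b / (a + b) := by field_simp; ring
  rw [hb']
  have hA := mul_log_le_mul_log_div_add_sub ha hab hy0
  have hB := mul_log_le_mul_log_div_add_sub hb hab (sub_pos.mpr hy1)
  linarith

theorem optimal_discriminator_general (n : ℕ) (p q : (Fin n → ℝ) → ℝ)
    (hp0 : ∀ x, 0 ≤ p x) (hq0 : ∀ x, 0 ≤ q x)
    (D : (Fin n → ℝ) → ℝ)
    (hD01 : ∀ x, D x ∈ Set.Ioo (0 : ℝ) 1)
    (hint1 : Integrable (fun x => p x * Real.log (D x)))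
    (hint2 : Integrable (fun x => q x * Real.log (1 - D x)))
    (hint3 : Integrable (fun x => p x * Real.log (p x / (p x + q x))))
    (hint4 : Integrable (fun x => q x * Real.log (1 - p x / (p x + q x)))) :
    (∫ x, p x * Real.log (D x)) + (∫ x, q x * Real.log (1 - D x)) ≤
      (∫ x, p x * Real.log (p x / (p x + q x))) +
        (∫ x, q x * Real.log (1 - p x / (p x + q x))) := by
  rw [← integral_add hint1 hint2, ← integral_add hint3 hint4]
  exact integral_mono (hint1.add hint2) (hint3.add hint4)
    fun x => mul_log_add_mul_log_one_sub_le (hp0 x) (hq0 x) (hD01 x)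

/-- The discriminator `D* = p/(p+q)` maximizes the GAN functional
`V(D) = ∫ p·log D + ∫ q·log (1 - D)` over measurable `D : ℝⁿ → (0,1)`. -/
theorem optimal_discriminator (n : ℕ) (p q : (Fin n → ℝ) → ℝ)
    (hp : Measurable p) (hq : Measurable q)
    (hp0 : ∀ x, 0 ≤ p x) (hq0 : ∀ x, 0 ≤ q x)
    (hp1 : ∫ x, p x = 1) (hq1 : ∫ x, q x = 1)
    (D : (Fin n → ℝ) → ℝ) (hD : Measurable D)
    (hD01 : ∀ x, D x ∈ Set.Ioo (0 : ℝ) 1)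
    (hint1 : Integrable (fun x => p x * Real.log (D x)))
    (hint2 : Integrable (fun x => q x * Real.log (1 - D x)))
    (hint3 : Integrable (fun x => p x * Real.log (p x / (p x + q x))))
    (hint4 : Integrable (fun x => q x * Real.log (1 - p x / (p x + q x)))) :
    (∫ x, p x * Real.log (D x)) + (∫ x, q x * Real.log (1 - D x)) ≤
      (∫ x, p x * Real.log (p x / (p x + q x))) +
        (∫ x, q x * Real.log (1 - p x / (p x + q x))) :=
  optimal_discriminator_general n p q hp0 hq0 D hD01 hint1 hint2 hint3 hint4
end

section
/- For any probability densities p, q on ℝⁿ, the optimal GAN value satisfies −log 4 ≤ ∫ p·log(p/(p+q)) + ∫ q·log(q/(p+q)) ≤ 0, with the lower bound attained if and only if p = q almost everywhere. -/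
open MeasureTheory Real

private lemma mul_log_div_eq' (a s : ℝ) (ha : 0 ≤ a) (hs : s ≠ 0) :
    a * Real.log (a / s) = a * Real.log a - a * Real.log s := by
  rcases eq_or_lt_of_le ha with h | h
  · simp [← h]
  · rw [Real.log_div (ne_of_gt h) hs, mul_sub]

private lemma key_pt (a b : ℝ) (ha : 0 ≤ a) (hb : 0 ≤ b) :
    0 ≤ a * Real.log (a/(a+b)) + b * Real.log (b/(a+b)) + (a+b) * Real.log 2 ∧
    (a * Real.log (a/(a+b)) + b * Real.log (b/(a+b)) + (a+b) * Real.log 2 = 0 ↔ a = b) := by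
  rcases eq_or_lt_of_le (add_nonneg ha hb) with hs | hs
  · have ha0 : a = 0 := by linarith [ha, hb]
    have hb0 : b = 0 := by linarith
    simp [ha0, hb0]
  · have hsne : a + b ≠ 0 := ne_of_gt hs
    have hE : a * Real.log (a/(a+b)) + b * Real.log (b/(a+b)) + (a+b) * Real.log 2
        = (a * Real.log a + b * Real.log b) - (a+b) * Real.log ((a+b)/2) := by
      rw [mul_log_div_eq' a _ ha hsne, mul_log_div_eq' b _ hb hsne,
        Real.log_div hsne (by norm_num)]
      ring
    rw [hE]
    by_cases hab : a = b
    · subst hab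
      constructor
      · have : (a + a) / 2 = a := by ring
        rw [this]; ring_nf; exact le_refl _
      · have : (a + a) / 2 = a := by ring
        rw [this]; constructor <;> intro <;> [rfl; ring]
    · have hstrict := Real.strictConvexOn_mul_log.2 (Set.mem_Ici.mpr ha)
        (Set.mem_Ici.mpr hb) hab (by norm_num : (0:ℝ) < 1/2) (by norm_num : (0:ℝ) < 1/2)
        (by norm_num)
      simp only [smul_eq_mul] at hstrict
      have h2 : (a+b) * Real.log ((a+b)/2) < a * Real.log a + b * Real.log b := by
        have : (1/2 : ℝ) * a + 1/2 * b = (a+b)/2 := by ring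
        rw [this] at hstrict
        nlinarith [hstrict]
      constructor
      · linarith
      · constructor
        · intro h; linarith
        · intro h; exact absurd h hab

/-- The optimal GAN value satisfies `-log 4 ≤ ∫ p·log(p/(p+q)) + ∫ q·log(q/(p+q)) ≤ 0`,
with the lower bound attained iff `p = q` almost everywhere. -/
theorem gan_value_bounds (n : ℕ) (p q : (Fin n → ℝ) → ℝ)
    (hp : Measurable p) (hq : Measurable q)
    (hp0 : ∀ x, 0 ≤ p x) (hq0 : ∀ x, 0 ≤ q x)
    (hp1 : ∫ x, p x = 1) (hq1 : ∫ x, q x = 1)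
    (h1 : Integrable (fun x => p x * Real.log (p x / (p x + q x))))
    (h2 : Integrable (fun x => q x * Real.log (q x / (p x + q x)))) :
    -Real.log 4 ≤ (∫ x, p x * Real.log (p x / (p x + q x))) +
        (∫ x, q x * Real.log (q x / (p x + q x))) ∧
    (∫ x, p x * Real.log (p x / (p x + q x))) +
        (∫ x, q x * Real.log (q x / (p x + q x))) ≤ 0 ∧
    ((∫ x, p x * Real.log (p x / (p x + q x))) +
        (∫ x, q x * Real.log (q x / (p x + q x))) = -Real.log 4 ↔
      p =ᵐ[volume] q) := by
  have hpint : Integrable p := integrable_of_integral_eq_one hp1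
  have hqint : Integrable q := integrable_of_integral_eq_one hq1
  set g : (Fin n → ℝ) → ℝ := fun x =>
    p x * Real.log (p x / (p x + q x)) + q x * Real.log (q x / (p x + q x))
      + (p x + q x) * Real.log 2 with hg_def
  have hgint : Integrable g := (h1.add h2).add ((hpint.add hqint).mul_const _)
  have hgnn : ∀ x, 0 ≤ g x := fun x => (key_pt _ _ (hp0 x) (hq0 x)).1
  have hIg : ∫ x, g x = (∫ x, p x * Real.log (p x / (p x + q x))) +
      (∫ x, q x * Real.log (q x / (p x + q x))) + 2 * Real.log 2 := by
    have e2 : Integrable (fun x => (p x + q x) * Real.log 2) :=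
      ((hpint.add hqint).mul_const _ : Integrable (fun x => (p x + q x) * Real.log 2))
    rw [hg_def]
    have e1 : Integrable (fun x => p x * Real.log (p x / (p x + q x)) +
        q x * Real.log (q x / (p x + q x))) :=
      (h1.add h2 : Integrable (fun x => p x * Real.log (p x / (p x + q x)) +
        q x * Real.log (q x / (p x + q x))))
    rw [integral_add e1 e2, integral_add h1 h2]
    have : ∫ x, (p x + q x) * Real.log 2 = 2 * Real.log 2 := by
      rw [integral_mul_const, integral_add hpint hqint, hp1, hq1]; ring
    rw [this]
  have hlog4 : Real.log 4 = 2 * Real.log 2 := by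
    rw [show (4:ℝ) = 2^2 by norm_num, Real.log_pow]; push_cast; ring
  have hgnn' : 0 ≤ ∫ x, g x := integral_nonneg hgnn
  refine ⟨by rw [hlog4]; linarith [hgnn', hIg.ge, hIg.le], ?_, ?_⟩
  · have hA : (∫ x, p x * Real.log (p x / (p x + q x))) ≤ 0 := by
      apply integral_nonpos
      intro x
      rcases eq_or_lt_of_le (hp0 x) with h | h
      · simp [← h]
      · apply mul_nonpos_of_nonneg_of_nonpos (le_of_lt h)
        apply Real.log_nonpos
        · exact div_nonneg (le_of_lt h) (by linarith [hq0 x])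
        · rw [div_le_one (by linarith [hq0 x])]; linarith [hq0 x]
    have hB : (∫ x, q x * Real.log (q x / (p x + q x))) ≤ 0 := by
      apply integral_nonpos
      intro x
      rcases eq_or_lt_of_le (hq0 x) with h | h
      · simp [← h]
      · apply mul_nonpos_of_nonneg_of_nonpos (le_of_lt h)
        apply Real.log_nonpos
        · exact div_nonneg (le_of_lt h) (by linarith [hp0 x])
        · rw [div_le_one (by linarith [hp0 x])]; linarith [hp0 x]
    linarith
  · constructor
    · intro h
      have hg0 : ∫ x, g x = 0 := by rw [hIg, h, hlog4]; ring
      have := (integral_eq_zero_iff_of_nonneg hgnn hgint).mp hg0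
      filter_upwards [this] with x hx
      exact ((key_pt _ _ (hp0 x) (hq0 x)).2).mp hx
    · intro h
      have hgz : g =ᵐ[volume] (0 : (Fin n → ℝ) → ℝ) := by
        filter_upwards [h] with x hx
        exact ((key_pt _ _ (hp0 x) (hq0 x)).2).mpr hx
      have hg0 : ∫ x, g x = 0 := by
        rw [integral_congr_ae hgz]; simp
      rw [hlog4]; linarith [hIg.symm.trans hg0]
end
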